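/- Let E be a sandpile graph. The following are equivalent: (1) the set Idem(SP(E)) of idempotents of SP(E), ordered by the canonical preorder of SP(E), is totally ordered; (2) the lattice 𝓕_E of filters of 𝓒_E, ordered by inclusion, is totally ordered; (3) the poset 𝓒_E of strongly connected cyclic components of E is totally ordered; (4) the lattice 𝓗_E of nonempty saturated hereditary subsets of E⁰, ordered by inclusion, is totally ordered. -/
import Mathlib


/-! ### Generic commutative monoid notions -/

/-- The canonical preorder on a commutative monoid: `x ≤ y` iff `y = x + z` for some `z`. -/
def cle {M : Type} [AddCommMonoid M] (x y : M) : Prop := ∃ z, y = x + z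

/-- The archimedean equivalence relation on a commutative monoid. -/
def archRel {M : Type} [AddCommMonoid M] (x y : M) : Prop :=
  (∃ m : ℕ, cle x (m • y)) ∧ (∃ n : ℕ, cle y (n • x))

/-- An element `a` is recurrent if it is accessible from every element. -/
def Recurrent {M : Type} [AddCommMonoid M] (a : M) : Prop := ∀ c, ∃ z, a = c + z

/-- An order-ideal of a commutative monoid: a submonoid `I` with `x + y ∈ I → x ∈ I ∧ y ∈ I`. -/
def IsOrderIdeal {M : Type} [AddCommMonoid M] (I : Set M) : Prop :=
  0 ∈ I ∧ (∀ x ∈ I, ∀ y ∈ I, x + y ∈ I) ∧ ∀ x y : M, x + y ∈ I → x ∈ I ∧ y ∈ I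

/-- A subsemigroup which is a group under the induced addition. -/
def IsSubgroupSet {M : Type} [AddCommMonoid M] (S : Set M) : Prop :=
  S.Nonempty ∧ (∀ x ∈ S, ∀ y ∈ S, x + y ∈ S) ∧
    ∃ e ∈ S, (∀ x ∈ S, e + x = x) ∧ ∀ x ∈ S, ∃ y ∈ S, x + y = e

/-- A maximal subgroup of a commutative monoid. -/
def IsMaximalSubgroup {M : Type} [AddCommMonoid M] (S : Set M) : Prop :=
  IsSubgroupSet S ∧ ∀ T : Set M, IsSubgroupSet T → S ⊆ T → S = T

/-- The defining setoid of the Grothendieck group of a commutative monoid. -/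
def grSetoid (M : Type) [AddCommMonoid M] : Setoid (M × M) where
  r p q := ∃ z, p.1 + q.2 + z = p.2 + q.1 + z
  iseqv := by
    constructor
    · exact fun p => ⟨0, by abel⟩
    · intro p q h
      obtain ⟨z, hz⟩ := h
      exact ⟨z, by
        calc q.1 + p.2 + z = p.2 + q.1 + z := by abel
          _ = p.1 + q.2 + z := hz.symm
          _ = q.2 + p.1 + z := by abel⟩
    · intro p q r h h'
      obtain ⟨z₁, h₁⟩ := h
      obtain ⟨z₂, h₂⟩ := h'
      refine ⟨q.1 + q.2 + z₁ + z₂, ?_⟩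
      have h : (p.1 + q.2 + z₁) + (q.1 + r.2 + z₂) = (p.2 + q.1 + z₁) + (q.2 + r.1 + z₂) := by
        rw [h₁, h₂]
      calc p.1 + r.2 + (q.1 + q.2 + z₁ + z₂)
          = (p.1 + q.2 + z₁) + (q.1 + r.2 + z₂) := by abel
        _ = (p.2 + q.1 + z₁) + (q.2 + r.1 + z₂) := h
        _ = p.2 + r.1 + (q.1 + q.2 + z₁ + z₂) := by abel

/-- The Grothendieck group of a commutative monoid, as a quotient of `M × M`. -/
def GrGroup (M : Type) [AddCommMonoid M] : Type := Quotient (grSetoid M)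

/-- Addition on the Grothendieck group. -/
def GrGroup.add {M : Type} [AddCommMonoid M] (p q : GrGroup M) : GrGroup M :=
  Quotient.map₂
    (fun p q => (p.1 + q.1, p.2 + q.2))
    (by
      intro p p' hp q q' hq
      obtain ⟨z₁, h₁⟩ := hp
      obtain ⟨z₂, h₂⟩ := hq
      refine ⟨z₁ + z₂, ?_⟩
      have h : (p.1 + p'.2 + z₁) + (q.1 + q'.2 + z₂)
          = (p.2 + p'.1 + z₁) + (q.2 + q'.1 + z₂) := by rw [h₁, h₂]
      calc p.1 + q.1 + (p'.2 + q'.2) + (z₁ + z₂)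
          = (p.1 + p'.2 + z₁) + (q.1 + q'.2 + z₂) := by abel
        _ = (p.2 + p'.1 + z₁) + (q.2 + q'.1 + z₂) := h
        _ = p.2 + q.2 + (p'.1 + q'.1) + (z₁ + z₂) := by abel)
    p q

instance {M : Type} [AddCommMonoid M] : Add (GrGroup M) := ⟨GrGroup.add⟩

/-- The defining setoid of the Grothendieck group of a (nonempty, additively closed)
subsemigroup `S` of a commutative monoid. -/
def grSubSetoid {M : Type} [AddCommMonoid M] (S : Set M) (x₀ : M) (hx₀ : x₀ ∈ S)
    (hcl : ∀ a ∈ S, ∀ b ∈ S, a + b ∈ S) : Setoid (S × S) where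
  r p q := ∃ z ∈ S, p.1.1 + q.2.1 + z = p.2.1 + q.1.1 + z
  iseqv := by
    constructor
    · exact fun p => ⟨x₀, hx₀, by abel⟩
    · intro p q h
      obtain ⟨z, hzS, hz⟩ := h
      exact ⟨z, hzS, by
        calc q.1.1 + p.2.1 + z = p.2.1 + q.1.1 + z := by abel
          _ = p.1.1 + q.2.1 + z := hz.symm
          _ = q.2.1 + p.1.1 + z := by abel⟩
    · intro p q r h h'
      obtain ⟨z₁, hz₁S, h₁⟩ := h
      obtain ⟨z₂, hz₂S, h₂⟩ := h'
      refine ⟨q.1.1 + q.2.1 + z₁ + z₂,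
        hcl _ (hcl _ (hcl _ q.1.2 _ q.2.2) _ hz₁S) _ hz₂S, ?_⟩
      have h : (p.1.1 + q.2.1 + z₁) + (q.1.1 + r.2.1 + z₂)
          = (p.2.1 + q.1.1 + z₁) + (q.2.1 + r.1.1 + z₂) := by rw [h₁, h₂]
      calc p.1.1 + r.2.1 + (q.1.1 + q.2.1 + z₁ + z₂)
          = (p.1.1 + q.2.1 + z₁) + (q.1.1 + r.2.1 + z₂) := by abel
        _ = (p.2.1 + q.1.1 + z₁) + (q.2.1 + r.1.1 + z₂) := h
        _ = p.2.1 + r.1.1 + (q.1.1 + q.2.1 + z₁ + z₂) := by abel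

/-- Addition on the Grothendieck group of a subsemigroup. -/
def grSubAdd {M : Type} [AddCommMonoid M] {S : Set M} {x₀ : M} {hx₀ : x₀ ∈ S}
    {hcl : ∀ a ∈ S, ∀ b ∈ S, a + b ∈ S}
    (p q : Quotient (grSubSetoid S x₀ hx₀ hcl)) : Quotient (grSubSetoid S x₀ hx₀ hcl) :=
  Quotient.map₂
    (fun p q => (⟨p.1.1 + q.1.1, hcl _ p.1.2 _ q.1.2⟩, ⟨p.2.1 + q.2.1, hcl _ p.2.2 _ q.2.2⟩))
    (by
      intro p p' hp q q' hq
      obtain ⟨z₁, hz₁S, h₁⟩ := hp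
      obtain ⟨z₂, hz₂S, h₂⟩ := hq
      refine ⟨z₁ + z₂, hcl _ hz₁S _ hz₂S, ?_⟩
      have h : (p.1.1 + p'.2.1 + z₁) + (q.1.1 + q'.2.1 + z₂)
          = (p.2.1 + p'.1.1 + z₁) + (q.2.1 + q'.1.1 + z₂) := by rw [h₁, h₂]
      calc p.1.1 + q.1.1 + (p'.2.1 + q'.2.1) + (z₁ + z₂)
          = (p.1.1 + p'.2.1 + z₁) + (q.1.1 + q'.2.1 + z₂) := by abel
        _ = (p.2.1 + p'.1.1 + z₁) + (q.2.1 + q'.1.1 + z₂) := h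
        _ = p.2.1 + q.2.1 + (p'.1.1 + q'.1.1) + (z₁ + z₂) := by abel)
    p q

/-! ### Finite directed graphs and sandpile monoids -/

/-- A finite directed graph. -/
structure DGraph where
  V : Type
  E : Type
  [fintV : Fintype V]
  [fintE : Fintype E]
  [decV : DecidableEq V]
  [decE : DecidableEq E]
  src : E → V
  rng : E → V

attribute [instance] DGraph.fintV DGraph.fintE DGraph.decV DGraph.decE

namespace DGraph

variable (G : DGraph)

/-- A vertex is a sink if it emits no edges. -/
def IsSink (v : G.V) : Prop := ∀ e : G.E, G.src e ≠ v

/-- One-step reachability along an edge. -/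
def Step (u v : G.V) : Prop := ∃ e : G.E, G.src e = u ∧ G.rng e = v

/-- There is a (possibly empty) path from `u` to `v`. -/
def Reaches (u v : G.V) : Prop := Relation.ReflTransGen G.Step u v

/-- A vertex lies on a cycle iff there is a nontrivial closed path based at it. -/
def OnCycle (v : G.V) : Prop := Relation.TransGen G.Step v v

/-- A sandpile graph: `s` is the unique sink and every vertex reaches `s`. -/
def IsSandpile (s : G.V) : Prop :=
  G.IsSink s ∧ (∀ v : G.V, G.IsSink v → v = s) ∧ ∀ v : G.V, G.Reaches v s

/-- The set of edges emitted by `v`. -/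
def outEdges (v : G.V) : Finset G.E := Finset.univ.filter fun e => G.src e = v

/-- A hereditary subset of vertices. -/
def Hereditary (H : Finset G.V) : Prop := ∀ e : G.E, G.src e ∈ H → G.rng e ∈ H

/-- A saturated subset of vertices. -/
def Saturated (H : Finset G.V) : Prop :=
  ∀ v : G.V, ¬ G.IsSink v → (∀ e : G.E, G.src e = v → G.rng e ∈ H) → v ∈ H

/-- The restriction graph `E_H` of a hereditary subset `H`. -/
def restrict (H : Finset G.V) (hher : G.Hereditary H) : DGraph where
  V := {v : G.V // v ∈ H}
  E := {e : G.E // G.src e ∈ H}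
  src e := ⟨G.src e.1, e.2⟩
  rng e := ⟨G.rng e.1, hher e.1 e.2⟩

/-- The defining relations of the sandpile monoid: `s = 0` and, for each non-sink
vertex `v`, `|s⁻¹(v)|·v = Σ_{e ∈ s⁻¹(v)} r(e)`. -/
def spRel (s : G.V) : Multiset G.V → Multiset G.V → Prop := fun a b =>
  (a = {s} ∧ b = 0) ∨
    ∃ v : G.V, ¬ G.IsSink v ∧ a = Multiset.replicate (G.outEdges v).card v ∧
      b = (G.outEdges v).val.map G.rng

/-- The congruence on the free commutative monoid `Multiset G.V` generated by the
sandpile relations. -/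
def spCon (s : G.V) : AddCon (Multiset G.V) := addConGen (G.spRel s)

/-- The sandpile monoid `SP(E)`. -/
abbrev SP (s : G.V) : Type := (G.spCon s).Quotient

/-- The class in `SP(E)` of an element of the free commutative monoid on the vertices. -/
def spMk (s : G.V) (a : Multiset G.V) : G.SP s := (G.spCon s).mk' a

/-- The one-step toppling/reduction relation `→₁` on the free commutative monoid. -/
def step1 (s : G.V) : Multiset G.V → Multiset G.V → Prop := fun a b =>
  (s ∈ a ∧ b = a.filter fun v => v ≠ s) ∨
    ∃ v : G.V, ¬ G.IsSink v ∧ (G.outEdges v).card ≤ a.count v ∧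
      b = (a - Multiset.replicate (G.outEdges v).card v) + (G.outEdges v).val.map G.rng

/-- The reflexive transitive closure `→` of `→₁`. -/
def Transforms (s : G.V) : Multiset G.V → Multiset G.V → Prop :=
  Relation.ReflTransGen (G.step1 s)

/-- The image in `SP(E)` of the canonical embedding of `SP(E_H)`: classes of multisets
supported in `H`. -/
def spImage (s : G.V) (H : Finset G.V) : Set (G.SP s) :=
  Set.range fun a : Multiset {v : G.V // v ∈ H} => G.spMk s (a.map Subtype.val)

open Classical in
/-- The set `S_E` of vertices from which no cycle is reachable. -/
noncomputable def sinkSet : Finset G.V :=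
  Finset.univ.filter fun v => ¬ ∃ u, G.Reaches v u ∧ G.OnCycle u

/-- Mutual reachability. -/
def MutReach (u v : G.V) : Prop := G.Reaches u v ∧ G.Reaches v u

open Classical in
/-- The strongly connected component of a vertex. -/
noncomputable def scc (v : G.V) : Finset G.V := Finset.univ.filter fun u => G.MutReach v u

/-- The set `𝓒_E` of (vertex sets of) strongly connected cyclic components. -/
def cyclicComps : Set (Finset G.V) := {C | ∃ v : G.V, G.OnCycle v ∧ C = G.scc v}

/-- The order on components: `C ≤ C'` iff there is a path from a vertex of `C` to a
vertex of `C'`. -/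
def compLe (C C' : Finset G.V) : Prop := ∃ u ∈ C, ∃ w ∈ C', G.Reaches u w

/-- A filter of the poset `𝓒_E`. -/
def IsFilter (F : Set (Finset G.V)) : Prop :=
  F ⊆ G.cyclicComps ∧ ∀ C ∈ F, ∀ C' ∈ G.cyclicComps, G.compLe C C' → C' ∈ F

open Classical in
/-- The hereditary saturated closure of a set of vertices: the intersection (hence the
smallest) of all saturated hereditary subsets containing it. -/
noncomputable def hsClosure (X : Finset G.V) : Finset G.V :=
  Finset.univ.filter fun v =>
    ∀ H : Finset G.V, G.Hereditary H → G.Saturated H → X ⊆ H → v ∈ H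

open Classical in
/-- The union of a collection of components, as a finset of vertices. -/
noncomputable def compUnion (F : Set (Finset G.V)) : Finset G.V :=
  Finset.univ.filter fun v => ∃ C ∈ F, v ∈ C

/-- The poset `𝓗^s_E = {S_E} ∪ {H_C : C ∈ 𝓒_E}`. -/
def HsE : Set (Finset G.V) :=
  insert G.sinkSet {H | ∃ C ∈ G.cyclicComps, H = G.hsClosure C}

/-- An ideal of the poset `𝓗^s_E`. -/
def IsHsIdeal (I : Set (Finset G.V)) : Prop :=
  I.Nonempty ∧ I ⊆ G.HsE ∧ ∀ x ∈ I, ∀ y ∈ G.HsE, y ⊆ x → y ∈ I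

lemma hsClosure_hereditary (X : Finset G.V) : G.Hereditary (G.hsClosure X) := by
  classical
  intro e he
  simp only [hsClosure, Finset.mem_filter, Finset.mem_univ, true_and] at he ⊢
  have he' := he
  exact fun H hher hsat hX => hher e (he' H hher hsat hX)

end DGraph
namespace SPAux

open DGraph Relation

variable {G : DGraph}

/-- basic: reachability is transitive -/
lemma reaches_trans {u v w : G.V} (h : G.Reaches u v) (h' : G.Reaches v w) :
    G.Reaches u w := ReflTransGen.trans h h'

lemma reaches_refl (v : G.V) : G.Reaches v v := ReflTransGen.refl

lemma sink_reaches_eq {s u : G.V} (hs : G.IsSink s) (h : G.Reaches s u) : u = s := by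
  induction h using Relation.ReflTransGen.head_induction_on with
  | refl => rfl
  | head hstep _ _ =>
    obtain ⟨e, he, _⟩ := hstep
    exact absurd he (hs e)

lemma onCycle_head {v : G.V} (h : G.OnCycle v) :
    ∃ w, G.Step v w ∧ G.Reaches w v := by
  obtain ⟨c, hc, hc'⟩ := (Relation.TransGen.head'_iff).1 h
  exact ⟨c, hc, hc'⟩

lemma not_onCycle_sink {s : G.V} (hs : G.IsSink s) : ¬ G.OnCycle s := by
  intro h
  obtain ⟨w, ⟨e, he, _⟩, _⟩ := onCycle_head h
  exact hs e he

lemma onCycle_of_reach_cycle_reach {u v : G.V} (h1 : G.Reaches v u) (h2 : G.OnCycle u)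
    (h3 : G.Reaches u v) : G.OnCycle v := by
  rcases h1.cases_head with rfl | ⟨w, hw, hwu⟩
  · exact h2
  · exact Relation.TransGen.head hw
      (Relation.TransGen.trans_left (Relation.TransGen.trans_right hwu h2) h3)

lemma mutReach_refl (v : G.V) : G.MutReach v v := ⟨ReflTransGen.refl, ReflTransGen.refl⟩

lemma mutReach_symm {u v : G.V} (h : G.MutReach u v) : G.MutReach v u := ⟨h.2, h.1⟩

lemma mutReach_trans {u v w : G.V} (h : G.MutReach u v) (h' : G.MutReach v w) :
    G.MutReach u w := ⟨h.1.trans h'.1, h'.2.trans h.2⟩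

lemma mem_scc {u v : G.V} : v ∈ G.scc u ↔ G.MutReach u v := by
  classical
  simp [DGraph.scc]

lemma self_mem_scc (v : G.V) : v ∈ G.scc v := mem_scc.2 (mutReach_refl v)

lemma scc_eq_of_mutReach {u v : G.V} (h : G.MutReach u v) : G.scc u = G.scc v := by
  ext w
  simp only [mem_scc]
  exact ⟨fun h' => mutReach_trans (mutReach_symm h) h',
         fun h' => mutReach_trans h h'⟩

lemma onCycle_of_mem_cyclicComp {C : Finset G.V} (hC : C ∈ G.cyclicComps)
    {v : G.V} (hv : v ∈ C) : G.OnCycle v := by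
  obtain ⟨u, hu, rfl⟩ := hC
  have h := mem_scc.1 hv
  exact onCycle_of_reach_cycle_reach h.2 hu h.1

lemma scc_mem_cyclicComps {v : G.V} (hv : G.OnCycle v) : G.scc v ∈ G.cyclicComps :=
  ⟨v, hv, rfl⟩

lemma reaches_of_mem_comp {C : Finset G.V} (hC : C ∈ G.cyclicComps)
    {u w : G.V} (hu : u ∈ C) (hw : w ∈ C) : G.Reaches u w := by
  obtain ⟨v, _, rfl⟩ := hC
  exact (mem_scc.1 hu).2.trans (mem_scc.1 hw).1

lemma compLe_refl {C : Finset G.V} (hC : C ∈ G.cyclicComps) : G.compLe C C := by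
  obtain ⟨v, _, rfl⟩ := hC
  exact ⟨v, self_mem_scc v, v, self_mem_scc v, ReflTransGen.refl⟩

lemma compLe_trans {C C' C'' : Finset G.V} (hC' : C' ∈ G.cyclicComps)
    (h : G.compLe C C') (h' : G.compLe C' C'') : G.compLe C C'' := by
  obtain ⟨u, hu, w, hw, huw⟩ := h
  obtain ⟨u', hu', w', hw', hu'w'⟩ := h'
  exact ⟨u, hu, w', hw', (huw.trans (reaches_of_mem_comp hC' hw hu')).trans hu'w'⟩

/-- nonsink vertices have an out-edge -/
lemma exists_edge_of_not_sink {v : G.V} (hv : ¬ G.IsSink v) :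
    ∃ e, G.src e = v := by
  by_contra h
  push_neg at h
  exact hv fun e => h e

lemma outEdges_nonempty {v : G.V} (hv : ¬ G.IsSink v) : (G.outEdges v).Nonempty := by
  obtain ⟨e, he⟩ := exists_edge_of_not_sink hv
  exact ⟨e, by simp [DGraph.outEdges, he]⟩

lemma outEdges_card_pos {v : G.V} (hv : ¬ G.IsSink v) : 0 < (G.outEdges v).card :=
  Finset.card_pos.2 (outEdges_nonempty hv)

lemma mem_outEdges {v : G.V} {e : G.E} : e ∈ G.outEdges v ↔ G.src e = v := by
  simp [DGraph.outEdges]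

lemma not_sink_of_ne {s v : G.V} (hG : G.IsSandpile s) (hv : v ≠ s) : ¬ G.IsSink v :=
  fun h => hv (hG.2.1 v h)

end SPAux
namespace SPAux

variable {G : DGraph}

/-! ### SP monoid basics -/

lemma spMk_add (s : G.V) (a b : Multiset G.V) :
    G.spMk s (a + b) = G.spMk s a + G.spMk s b := by
  simp [DGraph.spMk]

lemma spMk_zero (s : G.V) : G.spMk s 0 = 0 := by
  simp [DGraph.spMk]

lemma spMk_eq_iff (s : G.V) {a b : Multiset G.V} :
    G.spMk s a = G.spMk s b ↔ G.spCon s a b := by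
  constructor
  · intro h; exact (AddCon.eq _).1 h
  · intro h; exact (AddCon.eq _).2 h

lemma spMk_sink (s : G.V) : G.spMk s {s} = 0 := by
  rw [show (0 : (G.spCon s).Quotient) = G.spMk s 0 from (spMk_zero s).symm,
    spMk_eq_iff]
  exact AddConGen.Rel.of _ _ (Or.inl ⟨rfl, rfl⟩)

lemma spMk_topple (s : G.V) {v : G.V} (hv : ¬ G.IsSink v) :
    G.spMk s (Multiset.replicate (G.outEdges v).card v) =
      G.spMk s ((G.outEdges v).val.map G.rng) := by
  rw [spMk_eq_iff]
  exact AddConGen.Rel.of _ _ (Or.inr ⟨v, hv, rfl, rfl⟩)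

lemma spMk_nsmul (s : G.V) (n : ℕ) (a : Multiset G.V) :
    G.spMk s (n • a) = n • G.spMk s a := by
  induction n with
  | zero => simp [spMk_zero, zero_nsmul]
  | succ n ih => rw [succ_nsmul, succ_nsmul, ← ih, ← spMk_add]

lemma spMk_replicate (s : G.V) (n : ℕ) (v : G.V) :
    G.spMk s (Multiset.replicate n v) = n • G.spMk s {v} := by
  rw [← spMk_nsmul]
  congr 1
  rw [Multiset.nsmul_singleton]

lemma idem_nsmul {M : Type} [AddCommMonoid M] {f : M} (hf : f + f = f) :
    ∀ n : ℕ, 0 < n → n • f = f := by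
  intro n hn
  induction n with
  | zero => omega
  | succ n ih =>
    rcases Nat.eq_zero_or_pos n with rfl | hn'
    · simp
    · rw [succ_nsmul, ih hn', hf]

/-! ### The filter invariant φ -/

/-- The set of cyclic components reachable from the support of a multiset. -/
def phi (G : DGraph) (a : Multiset G.V) : Set (Finset G.V) :=
  {C | C ∈ G.cyclicComps ∧ ∃ v ∈ a, ∃ u ∈ C, G.Reaches v u}

lemma phi_zero : phi G 0 = ∅ := by
  ext C; simp [phi]

lemma phi_add (a b : Multiset G.V) : phi G (a + b) = phi G a ∪ phi G b := by
  ext C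
  simp only [phi, Set.mem_setOf_eq, Set.mem_union, Multiset.mem_add]
  constructor
  · rintro ⟨hC, v, (hv | hv), hu⟩
    · exact Or.inl ⟨hC, v, hv, hu⟩
    · exact Or.inr ⟨hC, v, hv, hu⟩
  · rintro (⟨hC, v, hv, hu⟩ | ⟨hC, v, hv, hu⟩)
    · exact ⟨hC, v, Or.inl hv, hu⟩
    · exact ⟨hC, v, Or.inr hv, hu⟩

lemma phi_singleton_sink {s : G.V} (hG : G.IsSandpile s) : phi G {s} = ∅ := by
  ext C
  simp only [phi, Set.mem_setOf_eq, Set.mem_empty_iff_false, iff_false, not_and]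
  rintro hC ⟨v, hv, u, hu, hr⟩
  rw [Multiset.mem_singleton] at hv
  subst hv
  have := sink_reaches_eq hG.1 hr
  subst this
  exact not_onCycle_sink hG.1 (onCycle_of_mem_cyclicComp hC hu)

lemma phi_replicate {v : G.V} {n : ℕ} (hn : 0 < n) :
    phi G (Multiset.replicate n v) =
      {C | C ∈ G.cyclicComps ∧ ∃ u ∈ C, G.Reaches v u} := by
  ext C
  simp only [phi, Set.mem_setOf_eq]
  constructor
  · rintro ⟨hC, w, hw, hu⟩
    rw [Multiset.eq_of_mem_replicate hw] at hu
    exact ⟨hC, hu⟩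
  · rintro ⟨hC, hu⟩
    exact ⟨hC, v, Multiset.mem_replicate.2 ⟨hn.ne', rfl⟩, hu⟩

lemma phi_topple {v : G.V} (hv : ¬ G.IsSink v) :
    phi G (Multiset.replicate (G.outEdges v).card v) =
      phi G ((G.outEdges v).val.map G.rng) := by
  rw [phi_replicate (outEdges_card_pos hv)]
  ext C
  simp only [phi, Set.mem_setOf_eq, Multiset.mem_map, Finset.mem_val]
  constructor
  · rintro ⟨hC, u, hu, hr⟩
    rcases hr.cases_head with heq | ⟨w, hw, hwu⟩
    · -- u = v, so v is on a cycle
      subst heq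
      have hvc : G.OnCycle v := onCycle_of_mem_cyclicComp hC hu
      obtain ⟨w, ⟨e, he, hre⟩, hwv⟩ := onCycle_head hvc
      exact ⟨hC, w, ⟨e, mem_outEdges.2 he, hre⟩, v, hu, hwv⟩
    · obtain ⟨e, he, hre⟩ := hw
      exact ⟨hC, w, ⟨e, mem_outEdges.2 he, hre⟩, u, hu, hwu⟩
  · rintro ⟨hC, w, ⟨e, he, hre⟩, u, hu, hwu⟩
    refine ⟨hC, u, hu, Relation.ReflTransGen.head ⟨e, mem_outEdges.1 he, hre⟩ hwu⟩

/-- The φ-congruence: φ is invariant under the sandpile congruence. -/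
lemma phi_con {s : G.V} (hG : G.IsSandpile s) :
    ∀ {a b : Multiset G.V}, G.spCon s a b → phi G a = phi G b := by
  have key : ∀ a b, G.spCon s a b → phi G a = phi G b := by
    intro a b h
    induction h with
    | of a b hab =>
      rcases hab with ⟨rfl, rfl⟩ | ⟨v, hv, rfl, rfl⟩
      · rw [phi_singleton_sink hG, phi_zero]
      · exact phi_topple hv
    | refl => rfl
    | symm _ ih => exact ih.symm
    | trans _ _ ih1 ih2 => exact ih1.trans ih2
    | add _ _ ih1 ih2 => rw [phi_add, phi_add, ih1, ih2]
  exact fun {a b} h => key a b h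

lemma phi_eq_of_spMk_eq {s : G.V} (hG : G.IsSandpile s) {a b : Multiset G.V}
    (h : G.spMk s a = G.spMk s b) : phi G a = phi G b :=
  phi_con hG ((spMk_eq_iff s).1 h)

end SPAux
namespace SPAux

variable {G : DGraph}

/-! ### Extraction lemma: along a path, many chips at the start yield a chip at the end -/

lemma extraction {s : G.V} (hG : G.IsSandpile s) {w u : G.V} (h : G.Reaches w u) :
    ∃ N : ℕ, 0 < N ∧ ∃ z : G.SP s, N • G.spMk s {w} = G.spMk s {u} + z := by
  induction h using Relation.ReflTransGen.head_induction_on with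
  | refl => exact ⟨1, Nat.one_pos, 0, by rw [one_nsmul, add_zero]⟩
  | head hstep _ ih =>
    rename_i w w₁ _
    obtain ⟨N₁, hN₁, z₁, hz₁⟩ := ih
    obtain ⟨e, he, hre⟩ := hstep
    have hw : ¬ G.IsSink w := fun hs => hs e he
    have hemem : e ∈ G.outEdges w := mem_outEdges.2 he
    -- (outEdges w).val = e ::ₘ rest
    have hcons : (G.outEdges w).val = e ::ₘ ((G.outEdges w).val.erase e) :=
      (Multiset.cons_erase hemem).symm
    have hd : (G.outEdges w).card • G.spMk s {w} =
        G.spMk s {w₁} + G.spMk s (((G.outEdges w).val.erase e).map G.rng) := by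
      rw [← spMk_replicate, spMk_topple s hw]
      conv_lhs => rw [hcons]
      rw [Multiset.map_cons, hre, ← Multiset.singleton_add, spMk_add]
    refine ⟨N₁ * (G.outEdges w).card, Nat.mul_pos hN₁ (outEdges_card_pos hw),
      z₁ + N₁ • G.spMk s (((G.outEdges w).val.erase e).map G.rng), ?_⟩
    rw [mul_comm, mul_nsmul, hd, nsmul_add, hz₁]
    abel

/-! ### Well-founded induction off cycles -/

def offCycleRel (G : DGraph) : G.V → G.V → Prop :=
  fun u v => G.Step v u ∧ ¬ G.OnCycle v ∧ ¬ G.OnCycle u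

lemma offCycleRel_transGen_step {u v : G.V}
    (h : Relation.TransGen (offCycleRel G) u v) : Relation.TransGen G.Step v u := by
  induction h with
  | single h => exact Relation.TransGen.single h.1
  | tail _ h ih => exact Relation.TransGen.head h.1 ih

lemma offCycleRel_wf (G : DGraph) : WellFounded (Relation.TransGen (offCycleRel G)) := by
  have : IsIrrefl G.V (Relation.TransGen (offCycleRel G)) := by
    constructor
    intro a h
    have h' : G.OnCycle a := offCycleRel_transGen_step h
    cases h with
    | single hr => exact hr.2.1 h'
    | tail _ hr => exact hr.2.1 h'
  have : IsTrans G.V (Relation.TransGen (offCycleRel G)) := inferInstance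
  exact Finite.wellFounded_of_trans_of_irrefl _

/-- Generic induction principle: to prove `P` on all vertices satisfying a
step-hereditary condition `R`, it suffices to handle on-cycle vertices, the sink,
and saturation. -/
lemma key_induction {s : G.V} (hG : G.IsSandpile s) (P R : G.V → Prop)
    (hR : ∀ u v, G.Step u v → R u → R v)
    (hcyc : ∀ v, G.OnCycle v → R v → P v)
    (hs : P s)
    (hsat : ∀ v, ¬ G.IsSink v → (∀ e, G.src e = v → P (G.rng e)) → P v) :
    ∀ v, R v → P v := by
  intro v
  induction v using WellFounded.induction (offCycleRel_wf G) with
  | _ v IH =>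
  intro hRv
  by_cases hvc : G.OnCycle v
  · exact hcyc v hvc hRv
  by_cases hvs : v = s
  · exact hvs ▸ hs
  have hns : ¬ G.IsSink v := not_sink_of_ne hG hvs
  refine hsat v hns fun e he => ?_
  have hstep : G.Step v (G.rng e) := ⟨e, he, rfl⟩
  have hRu : R (G.rng e) := hR v (G.rng e) hstep hRv
  by_cases huc : G.OnCycle (G.rng e)
  · exact hcyc _ huc hRu
  · exact IH _ (Relation.TransGen.single ⟨hstep, hvc, huc⟩) hRu

/-! ### Absorption: vertices whose reachable cyclic components lie in φ f divide f -/

/-- Sum version: if every vertex of `a` divides `y` and `y` is idempotent or `a = 0`. -/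
lemma divides_sum {s : G.V} {y : G.SP s} (hy : y + y = y) :
    ∀ a : Multiset G.V, (∀ v ∈ a, ∃ z, y = G.spMk s {v} + z) →
      ∃ z, y = G.spMk s a + z := by
  intro a
  induction a using Multiset.induction_on with
  | empty => exact fun _ => ⟨y, by rw [spMk_zero, zero_add]⟩
  | cons v t ih =>
    intro h
    obtain ⟨z₁, hz₁⟩ := h v (Multiset.mem_cons_self v t)
    obtain ⟨z₂, hz₂⟩ := ih fun w hw => h w (Multiset.mem_cons_of_mem hw)
    refine ⟨z₁ + z₂, ?_⟩
    calc y = y + y := hy.symm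
    _ = (G.spMk s {v} + z₁) + (G.spMk s t + z₂) := by rw [← hz₁, ← hz₂]
    _ = G.spMk s (v ::ₘ t) + (z₁ + z₂) := by
        rw [show (v ::ₘ t) = {v} + t by rw [Multiset.singleton_add], spMk_add]; abel

lemma divides_sum_edges {s : G.V} {y : G.SP s} :
    ∀ m : Multiset G.E, (∀ e ∈ m, ∃ z, y = G.spMk s {G.rng e} + z) →
      ∃ z, Multiset.card m • y = G.spMk s (m.map G.rng) + z := by
  intro m
  induction m using Multiset.induction_on with
  | empty => exact fun _ => ⟨0, by simp [spMk_zero, zero_nsmul]⟩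
  | cons e t ih =>
    intro h
    obtain ⟨z₁, hz₁⟩ := h e (Multiset.mem_cons_self e t)
    obtain ⟨z₂, hz₂⟩ := ih fun e' he' => h e' (Multiset.mem_cons_of_mem he')
    refine ⟨z₁ + z₂, ?_⟩
    rw [Multiset.card_cons, Multiset.map_cons, succ_nsmul,
      show (G.rng e ::ₘ Multiset.map G.rng t) = {G.rng e} + Multiset.map G.rng t by
        rw [Multiset.singleton_add], spMk_add]
    calc Multiset.card t • y + y = (G.spMk s (t.map G.rng) + z₂) + (G.spMk s {G.rng e} + z₁) := by
          rw [← hz₁, ← hz₂]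
    _ = _ := by abel

/-- Members of components in `φ b` divide the idempotent `spMk b`. -/
lemma comp_divides {s : G.V} (hG : G.IsSandpile s) {b : Multiset G.V}
    (hidem : G.spMk s b + G.spMk s b = G.spMk s b)
    {C : Finset G.V} (hC : C ∈ phi G b) {v : G.V} (hv : v ∈ C) :
    ∃ z, G.spMk s b = G.spMk s {v} + z := by
  obtain ⟨hCc, w, hw, u, hu, hwu⟩ := hC
  -- first get [u] divides f
  have hwdiv : ∃ z, G.spMk s b = G.spMk s {w} + z := by
    refine ⟨G.spMk s (b.erase w), ?_⟩
    rw [← spMk_add]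
    congr 1
    rw [Multiset.singleton_add, Multiset.cons_erase hw]
  have hdiv : ∀ {x y : G.V}, G.Reaches x y → (∃ z, G.spMk s b = G.spMk s {x} + z) →
      ∃ z, G.spMk s b = G.spMk s {y} + z := by
    intro x y hxy ⟨z, hz⟩
    obtain ⟨N, hN, z', hz'⟩ := extraction hG hxy
    refine ⟨z' + N • z, ?_⟩
    calc G.spMk s b = N • G.spMk s b := (idem_nsmul hidem N hN).symm
    _ = N • G.spMk s {x} + N • z := by rw [hz, nsmul_add]
    _ = G.spMk s {y} + (z' + N • z) := by rw [hz']; abel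
  exact hdiv (hwu.trans (reaches_of_mem_comp hCc hu hv)) hwdiv

/-- Main absorption lemma (Lemma B): if every cyclic component reachable from `v`
lies in `φ b` and `spMk b` is idempotent, then `[v]` divides `spMk b`. -/
lemma absorb {s : G.V} (hG : G.IsSandpile s) {b : Multiset G.V}
    (hidem : G.spMk s b + G.spMk s b = G.spMk s b) :
    ∀ v : G.V, (∀ C ∈ G.cyclicComps, (∃ u ∈ C, G.Reaches v u) → C ∈ phi G b) →
      ∃ z, G.spMk s b = G.spMk s {v} + z := by
  refine key_induction hG _ _ ?_ ?_ ?_ ?_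
  · -- R is step-hereditary
    intro u v hstep hR C hCc ⟨u', hu', hru'⟩
    exact hR C hCc ⟨u', hu', Relation.ReflTransGen.head hstep hru'⟩
  · -- on-cycle case
    intro v hvc hR
    have hCmem : G.scc v ∈ phi G b :=
      hR (G.scc v) (scc_mem_cyclicComps hvc) ⟨v, self_mem_scc v, Relation.ReflTransGen.refl⟩
    exact comp_divides hG hidem hCmem (self_mem_scc v)
  · -- sink case
    exact ⟨G.spMk s b, by rw [spMk_sink, zero_add]⟩
  · -- saturation case
    intro v hns hP
    obtain ⟨z, hz⟩ := divides_sum_edges (G.outEdges v).val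
      (fun e he => hP e (mem_outEdges.1 he))
    have hcard : Multiset.card (G.outEdges v).val = (G.outEdges v).card := rfl
    rw [hcard, idem_nsmul hidem _ (outEdges_card_pos hns), ← spMk_topple s hns,
      spMk_replicate] at hz
    obtain ⟨d, hd⟩ : ∃ d, (G.outEdges v).card = d + 1 :=
      ⟨(G.outEdges v).card - 1, by have := outEdges_card_pos hns; omega⟩
    refine ⟨d • G.spMk s {v} + z, ?_⟩
    rw [hz, hd, succ_nsmul]
    abel

/-- Idempotents compare according to their φ filters. -/
lemma cle_of_phi_subset {s : G.V} (hG : G.IsSandpile s) {a b : Multiset G.V}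
    (hidem : G.spMk s b + G.spMk s b = G.spMk s b)
    (hsub : phi G a ⊆ phi G b) :
    cle (G.spMk s a) (G.spMk s b) := by
  obtain ⟨z, hz⟩ := divides_sum hidem a (fun v hv => by
    refine absorb hG hidem v fun C hCc ⟨u, hu, hru⟩ => ?_
    exact hsub ⟨hCc, v, hv, u, hu, hru⟩)
  exact ⟨z, hz⟩

end SPAux
namespace SPAux

variable {G : DGraph}

/-! ### Distance to the sink -/

def reachN (G : DGraph) : ℕ → G.V → G.V → Prop
  | 0, u, w => u = w
  | n+1, u, w => ∃ x, G.Step u x ∧ reachN G n x w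

lemma reachN_of_reaches {u w : G.V} (h : G.Reaches u w) : ∃ n, reachN G n u w := by
  induction h using Relation.ReflTransGen.head_induction_on with
  | refl => exact ⟨0, rfl⟩
  | head hstep _ ih =>
    obtain ⟨n, hn⟩ := ih
    exact ⟨n + 1, _, hstep, hn⟩

open Classical in
noncomputable def distTo (G : DGraph) (s : G.V) (v : G.V) : ℕ :=
  if h : ∃ n, reachN G n v s then Nat.find h else 0

lemma distTo_spec {s : G.V} (hG : G.IsSandpile s) (v : G.V) :
    reachN G (distTo G s v) v s := by
  classical
  have h : ∃ n, reachN G n v s := reachN_of_reaches (hG.2.2 v)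
  rw [distTo, dif_pos h]
  exact Nat.find_spec h

lemma distTo_le {s : G.V} {v : G.V} {n : ℕ} (h : reachN G n v s) :
    distTo G s v ≤ n := by
  classical
  rw [distTo, dif_pos ⟨n, h⟩]
  exact Nat.find_le h

lemma distTo_pos {s : G.V} (hG : G.IsSandpile s) {v : G.V} (hv : v ≠ s) :
    0 < distTo G s v := by
  rcases Nat.eq_zero_or_pos (distTo G s v) with h | h
  · exact absurd (h ▸ distTo_spec hG v : reachN G 0 v s) hv
  · exact h

lemma exists_edge_dist_lt {s : G.V} (hG : G.IsSandpile s) {v : G.V} (hv : v ≠ s) :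
    ∃ e, G.src e = v ∧ distTo G s (G.rng e) + 1 ≤ distTo G s v := by
  have hpos := distTo_pos hG hv
  have hspec := distTo_spec hG v
  obtain ⟨k, hk⟩ : ∃ k, distTo G s v = k + 1 := ⟨_, (Nat.succ_pred_eq_of_pos hpos).symm⟩
  rw [hk] at hspec
  obtain ⟨x, ⟨e, he, hre⟩, hx⟩ := hspec
  refine ⟨e, he, ?_⟩
  rw [hre, hk]
  have := distTo_le hx
  omega

/-! ### The superharmonic weight function -/

noncomputable def Dmax (G : DGraph) : ℕ := (Finset.univ.sup fun v => (G.outEdges v).card) + 1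

noncomputable def eps (G : DGraph) : ℚ := 1 / (2 * Dmax G)

lemma eps_pos : 0 < eps G := by
  have : (0 : ℚ) < 2 * Dmax G := by
    have : (1 : ℚ) ≤ Dmax G := by exact_mod_cast Nat.one_le_iff_ne_zero.2 (Nat.succ_ne_zero _)
    linarith
  exact div_pos one_pos this

lemma eps_le_one : eps G ≤ 1 := by
  rw [eps, div_le_one]
  · have : (1 : ℚ) ≤ Dmax G := by exact_mod_cast Nat.one_le_iff_ne_zero.2 (Nat.succ_ne_zero _)
    linarith
  · have : (1 : ℚ) ≤ Dmax G := by exact_mod_cast Nat.one_le_iff_ne_zero.2 (Nat.succ_ne_zero _)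
    linarith

lemma card_mul_eps_le {v : G.V} : ((G.outEdges v).card : ℚ) * eps G ≤ 1 / 2 := by
  have hd : ((G.outEdges v).card : ℚ) ≤ Dmax G := by
    have h1 : (G.outEdges v).card ≤ Finset.univ.sup fun u : G.V => (G.outEdges u).card :=
      Finset.le_sup (f := fun u : G.V => (G.outEdges u).card) (Finset.mem_univ v)
    have : (G.outEdges v).card ≤ Dmax G := le_trans h1 (Nat.le_succ _)
    exact_mod_cast this
  have hD : (0 : ℚ) < Dmax G := by
    exact_mod_cast Nat.pos_of_ne_zero (Nat.succ_ne_zero _)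
  have h2D : (0 : ℚ) < 2 * Dmax G := by linarith
  rw [eps, mul_one_div, div_le_div_iff₀ h2D (by norm_num : (0:ℚ) < 2)]
  linarith

noncomputable def hfun (G : DGraph) (s : G.V) (v : G.V) : ℚ := 1 - eps G ^ distTo G s v

lemma hfun_nonneg (s v : G.V) : 0 ≤ hfun G s v := by
  have h1 : eps G ^ distTo G s v ≤ 1 := pow_le_one₀ (le_of_lt eps_pos) eps_le_one
  rw [hfun]; linarith

lemma hfun_le_one (s v : G.V) : hfun G s v ≤ 1 := by
  have : 0 < eps G ^ distTo G s v := pow_pos eps_pos _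
  rw [hfun]; linarith

lemma hfun_sink {s : G.V} (hG : G.IsSandpile s) : hfun G s s = 0 := by
  have : distTo G s s = 0 := Nat.le_zero.1 (distTo_le (rfl : reachN G 0 s s))
  rw [hfun, this, pow_zero]; ring

noncomputable def maxDist (G : DGraph) (s : G.V) : ℕ := Finset.univ.sup (distTo G s)

noncomputable def delta (G : DGraph) (s : G.V) : ℚ := eps G ^ maxDist G s / 2

lemma delta_pos (s : G.V) : 0 < delta G s := by
  have := pow_pos (eps_pos (G := G)) (maxDist G s)
  rw [delta]; linarith

/-- The key superharmonicity inequality. -/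
lemma key_ineq {s : G.V} (hG : G.IsSandpile s) {v : G.V} (hv : ¬ G.IsSink v) :
    ((G.outEdges v).val.map fun e => hfun G s (G.rng e)).sum + delta G s ≤
      ((G.outEdges v).card : ℚ) * hfun G s v := by
  have hvs : v ≠ s := fun h => hv (h ▸ hG.1)
  obtain ⟨e₀, he₀, hd₀⟩ := exists_edge_dist_lt hG hvs
  set k := distTo G s v with hk
  have hk1 : 1 ≤ k := distTo_pos hG hvs
  have he₀m : e₀ ∈ G.outEdges v := mem_outEdges.2 he₀
  have hcons : (G.outEdges v).val = e₀ ::ₘ ((G.outEdges v).val.erase e₀) :=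
    (Multiset.cons_erase he₀m).symm
  set f : G.E → ℚ := fun e => hfun G s (G.rng e) with hf
  have hsum : ((G.outEdges v).val.map f).sum
      = f e₀ + (((G.outEdges v).val.erase e₀).map f).sum := by
    conv_lhs => rw [hcons]
    rw [Multiset.map_cons, Multiset.sum_cons]
  have hcard : Multiset.card ((G.outEdges v).val.erase e₀) = (G.outEdges v).card - 1 := by
    rw [Multiset.card_erase_of_mem he₀m]; rfl
  have hrest : (((G.outEdges v).val.erase e₀).map f).sum ≤
      (((G.outEdges v).card : ℚ) - 1) * 1 := by
    have h1 : (((G.outEdges v).val.erase e₀).map f).sum ≤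
        Multiset.card (((G.outEdges v).val.erase e₀).map f) • (1 : ℚ) := by
      apply Multiset.sum_le_card_nsmul
      intro x hx
      obtain ⟨e, _, rfl⟩ := Multiset.mem_map.1 hx
      exact hfun_le_one s _
    rw [Multiset.card_map, hcard] at h1
    have hc1 : 1 ≤ (G.outEdges v).card := outEdges_card_pos hv
    calc (((G.outEdges v).val.erase e₀).map f).sum ≤ ((G.outEdges v).card - 1 : ℕ) • (1 : ℚ) := h1
    _ = (((G.outEdges v).card : ℚ) - 1) * 1 := by
        rw [nsmul_eq_mul]
        congr 1
        push_cast [Nat.cast_sub hc1]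
        ring
  have hfe₀ : f e₀ ≤ 1 - eps G ^ (k - 1) := by
    simp only [hf, hfun]
    have : eps G ^ (k - 1) ≤ eps G ^ distTo G s (G.rng e₀) :=
      pow_le_pow_of_le_one (le_of_lt eps_pos) eps_le_one (by omega)
    linarith
  have hdelta : delta G s ≤ eps G ^ (k - 1) * (1 - ((G.outEdges v).card : ℚ) * eps G) := by
    have h1 : eps G ^ maxDist G s ≤ eps G ^ (k - 1) :=
      pow_le_pow_of_le_one (le_of_lt eps_pos) eps_le_one
        (by have : k ≤ maxDist G s :=
              Finset.le_sup (f := distTo G s) (Finset.mem_univ v)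
            omega)
    have h2 : (1 : ℚ) / 2 ≤ 1 - ((G.outEdges v).card : ℚ) * eps G := by
      have := card_mul_eps_le (G := G) (v := v)
      linarith
    have h3 : (0 : ℚ) < eps G ^ (k - 1) := pow_pos eps_pos _
    calc delta G s = eps G ^ maxDist G s * (1/2) := by rw [delta]; ring
    _ ≤ eps G ^ (k - 1) * (1 - ((G.outEdges v).card : ℚ) * eps G) := by
        apply mul_le_mul h1 h2 (by norm_num) (le_of_lt h3)
  have hpow : eps G ^ (k - 1) * eps G = eps G ^ k := by
    rw [← pow_succ]
    congr 1
    omega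
  have hrhs : ((G.outEdges v).card : ℚ) * hfun G s v
      = ((G.outEdges v).card : ℚ) - ((G.outEdges v).card : ℚ) * eps G ^ k := by
    rw [hfun, ← hk]; ring
  have hgap : eps G ^ (k - 1) * (((G.outEdges v).card : ℚ) * eps G) =
      ((G.outEdges v).card : ℚ) * eps G ^ k := by
    rw [← mul_assoc, mul_comm (eps G ^ (k-1)), mul_assoc, hpow]
  rw [hsum, hrhs]
  nlinarith [hfe₀, hrest, hdelta, hgap]

/-! ### The measure and termination -/

noncomputable def mu (G : DGraph) (s : G.V) (a : Multiset G.V) : ℚ :=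
  (a.map (hfun G s)).sum

lemma mu_nonneg (s : G.V) (a : Multiset G.V) : 0 ≤ mu G s a := by
  apply Multiset.sum_nonneg
  intro x hx
  obtain ⟨v, _, rfl⟩ := Multiset.mem_map.1 hx
  exact hfun_nonneg s v

lemma mu_add (s : G.V) (a b : Multiset G.V) : mu G s (a + b) = mu G s a + mu G s b := by
  rw [mu, Multiset.map_add, Multiset.sum_add]; rfl

lemma mu_replicate (s : G.V) (n : ℕ) (v : G.V) :
    mu G s (Multiset.replicate n v) = n • hfun G s v := by
  rw [mu, Multiset.map_replicate, Multiset.sum_replicate]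

/-- Removing sinks does not change the measure. -/
lemma mu_filter_ne_sink {s : G.V} (hG : G.IsSandpile s) (a : Multiset G.V) :
    mu G s (a.filter fun v => v ≠ s) = mu G s a := by
  conv_rhs => rw [← Multiset.filter_add_not (fun v => v ≠ s) a, mu_add]
  have : mu G s (a.filter fun v => ¬ v ≠ s) = 0 := by
    rw [mu]
    apply Multiset.sum_eq_zero
    intro x hx
    obtain ⟨v, hv, rfl⟩ := Multiset.mem_map.1 hx
    have : v = s := by
      have := Multiset.of_mem_filter hv
      tauto
    rw [this, hfun_sink hG]
  rw [this, add_zero]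

lemma mu_topple {s : G.V} (hG : G.IsSandpile s) {a : Multiset G.V} {v : G.V}
    (hv : ¬ G.IsSink v) (hc : (G.outEdges v).card ≤ a.count v) :
    mu G s ((a - Multiset.replicate (G.outEdges v).card v) + (G.outEdges v).val.map G.rng)
      + delta G s ≤ mu G s a := by
  classical
  have hle : Multiset.replicate (G.outEdges v).card v ≤ a :=
    Multiset.le_count_iff_replicate_le.1 hc
  have hsplit : a = (a - Multiset.replicate (G.outEdges v).card v) +
      Multiset.replicate (G.outEdges v).card v := (tsub_add_cancel_of_le hle).symm
  have h1 : mu G s a = mu G s (a - Multiset.replicate (G.outEdges v).card v)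
      + ((G.outEdges v).card : ℚ) * hfun G s v := by
    conv_lhs => rw [hsplit]
    rw [mu_add, mu_replicate, nsmul_eq_mul]
  have h2 : mu G s ((G.outEdges v).val.map G.rng)
      = ((G.outEdges v).val.map fun e => hfun G s (G.rng e)).sum := by
    rw [mu, Multiset.map_map]; rfl
  rw [mu_add, h1, h2]
  have := key_ineq hG hv (v := v)
  linarith

/-- A stable configuration. -/
def Stab (G : DGraph) (s : G.V) (a : Multiset G.V) : Prop :=
  a.count s = 0 ∧ ∀ v, ¬ G.IsSink v → a.count v < (G.outEdges v).card

lemma stabilization_aux {s : G.V} (hG : G.IsSandpile s) :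
    ∀ n : ℕ, ∀ a : Multiset G.V, Nat.floor (mu G s a / delta G s) ≤ n →
      ∃ b, G.Transforms s a b ∧ Stab G s b := by
  intro n
  induction n with
  | zero =>
    intro a ha
    set a' := a.filter (fun v => v ≠ s) with ha'
    have hstep0 : G.Transforms s a a' := by
      by_cases hs : s ∈ a
      · exact Relation.ReflTransGen.single (Or.inl ⟨hs, rfl⟩)
      · have hfa : a.filter (fun v => v ≠ s) = a :=
          Multiset.filter_eq_self.2 (fun x hx h => hs (h ▸ hx))
        rw [ha', hfa]
        exact Relation.ReflTransGen.refl
    have hmu' : mu G s a' = mu G s a := mu_filter_ne_sink hG a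
    have hcs : a'.count s = 0 := by
      rw [ha', Multiset.count_filter]
      simp
    refine ⟨a', hstep0, hcs, ?_⟩
    intro v hv
    by_contra hcnt
    push_neg at hcnt
    set b := (a' - Multiset.replicate (G.outEdges v).card v) + (G.outEdges v).val.map G.rng
    have hmub := mu_topple hG hv hcnt (a := a')
    have h0 : 0 ≤ mu G s b := mu_nonneg s b
    have hge : delta G s ≤ mu G s a := by rw [← hmu']; linarith [hmub]
    have : (1 : ℚ) ≤ mu G s a / delta G s := by
      rw [le_div_iff₀ (delta_pos s)]
      linarith
    have : 1 ≤ Nat.floor (mu G s a / delta G s) := by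
      exact_mod_cast Nat.le_floor (by exact_mod_cast this)
    omega
  | succ n ih =>
    intro a ha
    set a' := a.filter (fun v => v ≠ s) with ha'
    have hstep0 : G.Transforms s a a' := by
      by_cases hs : s ∈ a
      · exact Relation.ReflTransGen.single (Or.inl ⟨hs, rfl⟩)
      · have hfa : a.filter (fun v => v ≠ s) = a :=
          Multiset.filter_eq_self.2 (fun x hx h => hs (h ▸ hx))
        rw [ha', hfa]
        exact Relation.ReflTransGen.refl
    have hmu' : mu G s a' = mu G s a := mu_filter_ne_sink hG a
    have hcs : a'.count s = 0 := by
      rw [ha', Multiset.count_filter]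
      simp
    by_cases hstab : ∀ v, ¬ G.IsSink v → a'.count v < (G.outEdges v).card
    · exact ⟨a', hstep0, hcs, hstab⟩
    · push_neg at hstab
      obtain ⟨v, hv, hcnt⟩ := hstab
      set b := (a' - Multiset.replicate (G.outEdges v).card v) + (G.outEdges v).val.map G.rng
        with hb
      have hstep1 : G.step1 s a' b := Or.inr ⟨v, hv, hcnt, hb⟩
      have hmub := mu_topple hG hv hcnt (a := a')
      have h0 : 0 ≤ mu G s b := mu_nonneg s b
      have hfloor : Nat.floor (mu G s b / delta G s) ≤ n := by
        have hδ := delta_pos (G := G) s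
        have hdiv : mu G s b / delta G s + 1 ≤ mu G s a / delta G s := by
          rw [div_add' _ _ _ (ne_of_gt hδ), div_le_div_iff₀ hδ hδ]
          rw [← hmu']
          nlinarith [hmub]
        have h1 : Nat.floor (mu G s b / delta G s) + 1
            = Nat.floor (mu G s b / delta G s + 1) := by
          rw [Nat.floor_add_one (by positivity)]
        have h2 : Nat.floor (mu G s b / delta G s + 1) ≤ Nat.floor (mu G s a / delta G s) :=
          Nat.floor_le_floor hdiv
        omega
      obtain ⟨c, hc1, hc2⟩ := ih b hfloor
      exact ⟨c, (hstep0.tail hstep1).trans hc1, hc2⟩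

lemma stabilization {s : G.V} (hG : G.IsSandpile s) (a : Multiset G.V) :
    ∃ b, G.Transforms s a b ∧ Stab G s b :=
  stabilization_aux hG _ a le_rfl

/-! ### Transforms preserve the sandpile class -/

lemma spMk_all_sink {s : G.V} : ∀ c : Multiset G.V, (∀ x ∈ c, x = s) → G.spMk s c = 0 := by
  intro c
  induction c using Multiset.induction_on with
  | empty => exact fun _ => spMk_zero s
  | cons v t ih =>
    intro h
    have hv : v = s := h v (Multiset.mem_cons_self v t)
    rw [show (v ::ₘ t) = {v} + t by rw [Multiset.singleton_add], spMk_add, hv, spMk_sink,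
      zero_add]
    exact ih fun x hx => h x (Multiset.mem_cons_of_mem hx)

lemma step1_spMk {s : G.V} {a b : Multiset G.V} (h : G.step1 s a b) :
    G.spMk s a = G.spMk s b := by
  rcases h with ⟨hs, rfl⟩ | ⟨v, hv, hc, rfl⟩
  · conv_lhs => rw [← Multiset.filter_add_not (fun v => v ≠ s) a]
    rw [spMk_add, spMk_all_sink (a.filter fun v => ¬ v ≠ s)
      (fun x hx => by have := Multiset.of_mem_filter hx; tauto), add_zero]
  · have hle : Multiset.replicate (G.outEdges v).card v ≤ a :=
      Multiset.le_count_iff_replicate_le.1 hc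
    conv_lhs => rw [← tsub_add_cancel_of_le hle]
    rw [spMk_add, spMk_add, spMk_topple s hv]

lemma transforms_spMk {s : G.V} {a b : Multiset G.V} (h : G.Transforms s a b) :
    G.spMk s a = G.spMk s b := by
  induction h with
  | refl => rfl
  | tail _ hstep ih => exact ih.trans (step1_spMk hstep)

/-! ### Torsion and idempotent powers -/

lemma exists_torsion {s : G.V} (hG : G.IsSandpile s) (v : G.V) :
    ∃ m m' : ℕ, m < m' ∧ m • G.spMk s {v} = m' • G.spMk s {v} := by
  classical
  set B := Finset.univ.sup fun u : G.V => (G.outEdges u).card with hB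
  have hbound : ∀ a : Multiset G.V, Stab G s a → ∀ u, a.count u < B + 1 := by
    intro a ha u
    by_cases hu : G.IsSink u
    · have : u = s := hG.2.1 u hu
      rw [this, ha.1]; omega
    · have h1 := ha.2 u hu
      have h2 : (G.outEdges u).card ≤ B :=
        Finset.le_sup (f := fun u : G.V => (G.outEdges u).card) (Finset.mem_univ u)
      omega
  have hchoice : ∀ m : ℕ, ∃ b, G.Transforms s (Multiset.replicate m v) b ∧ Stab G s b :=
    fun m => stabilization hG _
  choose f hf1 hf2 using hchoice
  set g : ℕ → (G.V → Fin (B + 1)) := fun m u => ⟨(f m).count u, hbound _ (hf2 m) u⟩ with hg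
  obtain ⟨m, m', hne, heq⟩ := Finite.exists_ne_map_eq_of_infinite g
  have hfeq : f m = f m' := by
    ext u
    have := congrFun heq u
    rw [hg] at this
    simpa using congrArg Fin.val this
  have hsp : m • G.spMk s {v} = m' • G.spMk s {v} := by
    rw [← spMk_replicate, ← spMk_replicate, transforms_spMk (hf1 m), transforms_spMk (hf1 m'),
      hfeq]
  rcases lt_or_gt_of_ne hne with h | h
  · exact ⟨m, m', h, hsp⟩
  · exact ⟨m', m, h, hsp.symm⟩

lemma idem_of_torsion {M : Type} [AddCommMonoid M] {x : M} {m m' : ℕ} (hlt : m < m')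
    (h : m • x = m' • x) : ∃ k, 0 < k ∧ k • x + k • x = k • x := by
  set p := m' - m with hp
  have hp1 : 1 ≤ p := by omega
  have hmp : (m + p) • x = m • x := by
    rw [show m + p = m' by omega, h]
  have hstep : ∀ c, (m + p + c) • x = (m + c) • x := by
    intro c
    rw [add_nsmul, hmp, ← add_nsmul]
  have hiter : ∀ t c, (m + c + t * p) • x = (m + c) • x := by
    intro t
    induction t with
    | zero => intro c; simp
    | succ t ih =>
      intro c
      have h1 : m + c + (t + 1) * p = m + p + (c + t * p) := by ring
      rw [h1, hstep (c + t * p), show m + (c + t * p) = m + c + t * p by ring, ih c]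
  set k := (m + 1) * p with hk
  have hk0 : 0 < k := by positivity
  refine ⟨k, hk0, ?_⟩
  have hk1 : m + 1 ≤ k := by rw [hk]; nlinarith
  have hiter' := hiter (m + 1) (k - m)
  rw [← hk] at hiter'
  have h1k : m + (k - m) = k := by omega
  rw [h1k] at hiter'
  rw [← add_nsmul]
  exact hiter'

/-- For every vertex there is a positive `k` with `k • [v]` idempotent. -/
lemma exists_idem_pow {s : G.V} (hG : G.IsSandpile s) (v : G.V) :
    ∃ k, 0 < k ∧ k • G.spMk s {v} + k • G.spMk s {v} = k • G.spMk s {v} := by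
  obtain ⟨m, m', hlt, h⟩ := exists_torsion hG v
  exact idem_of_torsion hlt h

end SPAux
namespace SPAux

variable {G : DGraph}

/-! ### φ is a filter -/

lemma phi_isFilter (a : Multiset G.V) : G.IsFilter (phi G a) := by
  constructor
  · exact fun C hC => hC.1
  · rintro C ⟨hCc, v, hv, u, hu, hvu⟩ C' hC'c ⟨u1, hu1, w1, hw1, h1⟩
    exact ⟨hC'c, v, hv, w1, hw1,
      (hvu.trans (reaches_of_mem_comp hCc hu hu1)).trans h1⟩

/-- Principal filters. -/
lemma upSet_isFilter {C : Finset G.V} (hC : C ∈ G.cyclicComps) :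
    G.IsFilter {D | D ∈ G.cyclicComps ∧ G.compLe C D} := by
  constructor
  · exact fun D hD => hD.1
  · rintro D ⟨hDc, hCD⟩ D' hD'c hDD'
    exact ⟨hD'c, compLe_trans hDc hCD hDD'⟩

/-- If the cyclic components form a chain, so do the filters. -/
lemma filters_comparable {s : G.V} (hG : G.IsSandpile s)
    (hchain : ∀ C ∈ G.cyclicComps, ∀ C' ∈ G.cyclicComps, G.compLe C C' ∨ G.compLe C' C)
    {F F' : Set (Finset G.V)} (hF : G.IsFilter F) (hF' : G.IsFilter F') :
    F ⊆ F' ∨ F' ⊆ F := by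
  by_contra hcon
  push_neg at hcon
  obtain ⟨h1, h2⟩ := hcon
  obtain ⟨C, hCF, hCF'⟩ := Set.not_subset.1 h1
  obtain ⟨C', hC'F', hC'F⟩ := Set.not_subset.1 h2
  have hCc : C ∈ G.cyclicComps := hF.1 hCF
  have hC'c : C' ∈ G.cyclicComps := hF'.1 hC'F'
  rcases hchain C hCc C' hC'c with h | h
  · exact hC'F (hF.2 C hCF C' hC'c h)
  · exact hCF' (hF'.2 C' hC'F' C hCc h)

lemma comps_comparable_of_filters {s : G.V} (hG : G.IsSandpile s)
    (hfil : ∀ F F' : Set (Finset G.V), G.IsFilter F → G.IsFilter F' → F ⊆ F' ∨ F' ⊆ F) :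
    ∀ C ∈ G.cyclicComps, ∀ C' ∈ G.cyclicComps, G.compLe C C' ∨ G.compLe C' C := by
  intro C hC C' hC'
  rcases hfil _ _ (upSet_isFilter hC) (upSet_isFilter hC') with h | h
  · exact Or.inr (h ⟨hC, compLe_refl hC⟩).2
  · exact Or.inl (h ⟨hC', compLe_refl hC'⟩).2

/-! ### (A) ↔ (C) -/

lemma scc_mem_phi_replicate {v : G.V} (hv : G.OnCycle v) {k : ℕ} (hk : 0 < k) :
    G.scc v ∈ phi G (Multiset.replicate k v) :=
  ⟨scc_mem_cyclicComps hv, v, Multiset.mem_replicate.2 ⟨hk.ne', rfl⟩, v, self_mem_scc v,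
    Relation.ReflTransGen.refl⟩

lemma compLe_of_cle {s : G.V} (hG : G.IsSandpile s) {v v' : G.V}
    (hv : G.OnCycle v) (hv' : G.OnCycle v') {k k' : ℕ} (hk : 0 < k) (hk' : 0 < k')
    (h : cle (k • G.spMk s {v}) (k' • G.spMk s {v'})) :
    G.compLe (G.scc v') (G.scc v) := by
  obtain ⟨z, hz⟩ := h
  obtain ⟨c, rfl⟩ := AddCon.mk'_surjective z
  have heq : G.spMk s (Multiset.replicate k' v') = G.spMk s (Multiset.replicate k v + c) := by
    rw [spMk_replicate, spMk_add, spMk_replicate, hz]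
    rfl
  have hphi := phi_eq_of_spMk_eq hG heq
  rw [phi_add] at hphi
  have hmem : G.scc v ∈ phi G (Multiset.replicate k' v') := by
    rw [hphi]
    exact Or.inl (scc_mem_phi_replicate hv hk)
  obtain ⟨_, w, hw, u, hu, hwu⟩ := hmem
  rw [Multiset.eq_of_mem_replicate hw] at hwu
  exact ⟨v', self_mem_scc v', u, hu, hwu⟩

/-- (C) implies (A). -/
lemma idem_chain_of_comp_chain {s : G.V} (hG : G.IsSandpile s)
    (hchain : ∀ C ∈ G.cyclicComps, ∀ C' ∈ G.cyclicComps, G.compLe C C' ∨ G.compLe C' C) :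
    ∀ x y : G.SP s, x + x = x → y + y = y → cle x y ∨ cle y x := by
  intro x y hx hy
  obtain ⟨a, rfl⟩ := AddCon.mk'_surjective x
  obtain ⟨b, rfl⟩ := AddCon.mk'_surjective y
  have hxa : G.spMk s a + G.spMk s a = G.spMk s a := hx
  have hyb : G.spMk s b + G.spMk s b = G.spMk s b := hy
  rcases filters_comparable hG hchain (phi_isFilter a) (phi_isFilter b) with h | h
  · exact Or.inl (cle_of_phi_subset hG hyb h)
  · exact Or.inr (cle_of_phi_subset hG hxa h)

/-- (A) implies (C). -/
lemma comp_chain_of_idem_chain {s : G.V} (hG : G.IsSandpile s)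
    (hidem : ∀ x y : G.SP s, x + x = x → y + y = y → cle x y ∨ cle y x) :
    ∀ C ∈ G.cyclicComps, ∀ C' ∈ G.cyclicComps, G.compLe C C' ∨ G.compLe C' C := by
  rintro C ⟨v, hv, rfl⟩ C' ⟨v', hv', rfl⟩
  obtain ⟨k, hk, hkid⟩ := exists_idem_pow hG v
  obtain ⟨k', hk', hk'id⟩ := exists_idem_pow hG v'
  rcases hidem _ _ hkid hk'id with h | h
  · exact Or.inr (compLe_of_cle hG hv hv' hk hk' h)
  · exact Or.inl (compLe_of_cle hG hv' hv hk' hk h)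

/-! ### (C) ↔ (D) -/

lemma her_reach {H : Finset G.V} (hher : G.Hereditary H) {u w : G.V}
    (h : G.Reaches u w) (hu : u ∈ H) : w ∈ H := by
  induction h with
  | refl => exact hu
  | tail _ hstep ih =>
    obtain ⟨e, he, hre⟩ := hstep
    exact hre ▸ hher e (he ▸ ih)

lemma sink_mem {s : G.V} (hG : G.IsSandpile s) {H : Finset G.V}
    (hne : H.Nonempty) (hher : G.Hereditary H) : s ∈ H := by
  obtain ⟨v, hv⟩ := hne
  exact her_reach hher (hG.2.2 v) hv

/-- Membership criterion for saturated hereditary sets. -/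
lemma mem_of_reach_cycles {s : G.V} (hG : G.IsSandpile s) {H : Finset G.V}
    (hne : H.Nonempty) (hher : G.Hereditary H) (hsat : G.Saturated H) :
    ∀ w, (∀ u, G.Reaches w u → G.OnCycle u → u ∈ H) → w ∈ H := by
  refine key_induction hG _ _ ?_ ?_ (sink_mem hG hne hher) hsat
  · intro u v hstep hR u' hu' hc'
    exact hR u' (Relation.ReflTransGen.head hstep hu') hc'
  · intro v hvc hR
    exact hR v Relation.ReflTransGen.refl hvc

/-- (C) implies (D). -/
lemma hersat_chain_of_comp_chain {s : G.V} (hG : G.IsSandpile s)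
    (hchain : ∀ C ∈ G.cyclicComps, ∀ C' ∈ G.cyclicComps, G.compLe C C' ∨ G.compLe C' C) :
    ∀ H H' : Finset G.V,
      H.Nonempty → G.Hereditary H → G.Saturated H →
      H'.Nonempty → G.Hereditary H' → G.Saturated H' → H ⊆ H' ∨ H' ⊆ H := by
  intro H H' hne hher hsat hne' hher' hsat'
  set FH : Set (Finset G.V) := {C | C ∈ G.cyclicComps ∧ ∀ x ∈ C, x ∈ H} with hFH
  set FH' : Set (Finset G.V) := {C | C ∈ G.cyclicComps ∧ ∀ x ∈ C, x ∈ H'} with hFH'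
  have hfil : ∀ (K : Finset G.V), G.Hereditary K →
      G.IsFilter {C | C ∈ G.cyclicComps ∧ ∀ x ∈ C, x ∈ K} := by
    intro K hK
    constructor
    · exact fun C hC => hC.1
    · rintro C ⟨hCc, hCK⟩ C' hC'c ⟨u, hu, w, hw, huw⟩
      refine ⟨hC'c, fun x hx => ?_⟩
      exact her_reach hK (huw.trans (reaches_of_mem_comp hC'c hw hx)) (hCK u hu)
  have hsub : ∀ (K K' : Finset G.V), K.Nonempty → G.Hereditary K →
      K'.Nonempty → G.Hereditary K' → G.Saturated K' →
      ({C | C ∈ G.cyclicComps ∧ ∀ x ∈ C, x ∈ K} ⊆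
        {C | C ∈ G.cyclicComps ∧ ∀ x ∈ C, x ∈ K'}) → K ⊆ K' := by
    intro K K' hneK hherK hneK' hherK' hsatK' hsubF w hw
    refine mem_of_reach_cycles hG hneK' hherK' hsatK' w fun u hwu hc => ?_
    have huK : u ∈ K := her_reach hherK hwu hw
    have hCm : G.scc u ∈ {C | C ∈ G.cyclicComps ∧ ∀ x ∈ C, x ∈ K} := by
      refine ⟨scc_mem_cyclicComps hc, fun x hx => ?_⟩
      exact her_reach hherK (mem_scc.1 hx).1 huK
    exact (hsubF hCm).2 u (self_mem_scc u)
  rcases filters_comparable hG hchain (hfil H hher) (hfil H' hher') with h | h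
  · exact Or.inl (hsub H H' hne hher hne' hher' hsat' h)
  · exact Or.inr (hsub H' H hne' hher' hne hher hsat h)

lemma hsClosure_saturated (X : Finset G.V) : G.Saturated (G.hsClosure X) := by
  classical
  intro v hv hnb
  simp only [DGraph.hsClosure, Finset.mem_filter, Finset.mem_univ, true_and] at hnb ⊢
  intro H hher hsat hX
  refine hsat v hv fun e he => ?_
  exact hnb e he H hher hsat hX

lemma subset_hsClosure (X : Finset G.V) : X ⊆ G.hsClosure X := by
  classical
  intro v hv
  simp only [DGraph.hsClosure, Finset.mem_filter, Finset.mem_univ, true_and]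
  exact fun H _ _ hX => hX hv

lemma reach_of_mem_hsClosure {s : G.V} (hG : G.IsSandpile s) (X : Finset G.V)
    {v : G.V} (hv : v ∈ G.hsClosure X) :
    ∀ u, G.Reaches v u → G.OnCycle u → ∃ x ∈ X, G.Reaches x u := by
  classical
  set K : Finset G.V := Finset.univ.filter
    (fun w => ∀ u, G.Reaches w u → G.OnCycle u → ∃ x ∈ X, G.Reaches x u) with hK
  have hmemK : ∀ w, w ∈ K ↔ ∀ u, G.Reaches w u → G.OnCycle u → ∃ x ∈ X, G.Reaches x u := by
    intro w
    simp [hK]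
  have hher : G.Hereditary K := by
    intro e he
    rw [hmemK] at he ⊢
    intro u hu hc
    exact he u (Relation.ReflTransGen.head ⟨e, rfl, rfl⟩ hu) hc
  have hsat : G.Saturated K := by
    intro w hw hnb
    rw [hmemK]
    intro u hu hc
    rcases hu.cases_head with heq | ⟨w1, hw1, hw1u⟩
    · subst heq
      obtain ⟨w2, ⟨e, he, hre⟩, hw2⟩ := onCycle_head hc
      have := hnb e he
      rw [hmemK] at this
      exact this w (hre.symm ▸ hw2) hc
    · obtain ⟨e, he, hre⟩ := hw1
      have := hnb e he
      rw [hmemK] at this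
      exact this u (hre.symm ▸ hw1u) hc
  have hXK : X ⊆ K := by
    intro x hx
    rw [hmemK]
    intro u hu _
    exact ⟨x, hx, hu⟩
  have hvK : v ∈ K := by
    simp only [DGraph.hsClosure, Finset.mem_filter, Finset.mem_univ, true_and] at hv
    exact hv K hher hsat hXK
  rw [hmemK] at hvK
  exact hvK

/-- (D) implies (C). -/
lemma comp_chain_of_hersat_chain {s : G.V} (hG : G.IsSandpile s)
    (hd : ∀ H H' : Finset G.V,
      H.Nonempty → G.Hereditary H → G.Saturated H →
      H'.Nonempty → G.Hereditary H' → G.Saturated H' → H ⊆ H' ∨ H' ⊆ H) :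
    ∀ C ∈ G.cyclicComps, ∀ C' ∈ G.cyclicComps, G.compLe C C' ∨ G.compLe C' C := by
  rintro C ⟨v, hv, rfl⟩ C' ⟨v', hv', rfl⟩
  have hsub : ∀ w w' : G.V, G.OnCycle w → G.OnCycle w' →
      G.hsClosure (G.scc w) ⊆ G.hsClosure (G.scc w') →
      G.compLe (G.scc w') (G.scc w) := by
    intro w w' hw hw' hs'
    have hmem : w ∈ G.hsClosure (G.scc w') :=
      hs' (subset_hsClosure _ (self_mem_scc w))
    obtain ⟨x, hx, hxw⟩ := reach_of_mem_hsClosure hG _ hmem w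
      Relation.ReflTransGen.refl hw
    exact ⟨x, hx, w, self_mem_scc w, hxw⟩
  have hne : ∀ w : G.V, (G.hsClosure (G.scc w)).Nonempty :=
    fun w => ⟨w, subset_hsClosure _ (self_mem_scc w)⟩
  rcases hd (G.hsClosure (G.scc v)) (G.hsClosure (G.scc v'))
    (hne v) (G.hsClosure_hereditary _) (hsClosure_saturated _)
    (hne v') (G.hsClosure_hereditary _) (hsClosure_saturated _) with h | h
  · exact Or.inr (hsub v v' hv hv' h)
  · exact Or.inl (hsub v' v hv' hv h)

end SPAux
/-- Equivalence of the chain conditions: idempotents of `SP(E)` are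
totally ordered iff the filters of `𝓒_E` are, iff `𝓒_E` is, iff `𝓗_E` is. -/
theorem chain_conditions_equiv (G : DGraph) (s : G.V) (hG : G.IsSandpile s) :
    ((∀ x y : G.SP s, x + x = x → y + y = y → cle x y ∨ cle y x) ↔
      (∀ F F' : Set (Finset G.V), G.IsFilter F → G.IsFilter F' → F ⊆ F' ∨ F' ⊆ F)) ∧
    ((∀ x y : G.SP s, x + x = x → y + y = y → cle x y ∨ cle y x) ↔
      (∀ C ∈ G.cyclicComps, ∀ C' ∈ G.cyclicComps, G.compLe C C' ∨ G.compLe C' C)) ∧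
    ((∀ x y : G.SP s, x + x = x → y + y = y → cle x y ∨ cle y x) ↔
      (∀ H H' : Finset G.V,
        H.Nonempty → G.Hereditary H → G.Saturated H →
        H'.Nonempty → G.Hereditary H' → G.Saturated H' → H ⊆ H' ∨ H' ⊆ H)) := by
  have hAC : (∀ x y : G.SP s, x + x = x → y + y = y → cle x y ∨ cle y x) ↔
      (∀ C ∈ G.cyclicComps, ∀ C' ∈ G.cyclicComps, G.compLe C C' ∨ G.compLe C' C) :=
    ⟨SPAux.comp_chain_of_idem_chain hG, SPAux.idem_chain_of_comp_chain hG⟩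
  exact ⟨hAC.trans ⟨fun h F F' hF hF' => SPAux.filters_comparable hG h hF hF',
      SPAux.comps_comparable_of_filters hG⟩, hAC, hAC.trans
      ⟨SPAux.hersat_chain_of_comp_chain hG, SPAux.comp_chain_of_hersat_chain hG⟩⟩
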